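/- arXiv:1211.6227 — 10 statements merged into one kernel-verified Lean document; each statement's English description precedes it below -/
import Mathlib

section
/- Let n ≥ 1, 0 ≤ k < n, R₀ > 0 and d > 0. Let x ∈ ℝⁿ satisfy: x_i = 0 for all 1 ≤ i ≤ k (so ‖x‖ = ‖x''‖ where x'' denotes the vector of the last n−k coordinates), ‖x‖ = d, and ‖x‖ · cos(π/2 + d/(4R₀)) ≤ x_n (the cone condition with opening angle ρ_d = π/2 + d/(4R₀)). Then ‖x + R₀ e_n‖ > R₀, where e_n is the n-th standard basis vector. Consequently, the set 𝒲 = {x ∈ ℝⁿ : ‖x''‖ = d} ∩ {x : ‖x‖ cos(π/2 + d/(4R₀)) ≤ x_n} is disjoint from the half-ball {x ∈ ℝⁿ : x' = 0, ‖x'' + R₀ e_n‖ ≤ R₀}. -/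
open Real

open scoped RealInnerProductSpace

/-! Since `‖x + R e‖² = ‖x‖² + 2R⟪x, e⟫ + R²`, the point `x` lies outside the closed ball of
radius `R` about `-R e` as soon as `⟪x, e⟫ > -‖x‖²/(2R)`. The cone condition gives
`⟪x, e⟫ ≥ -‖x‖ sin (‖x‖/(4R)) ≥ -‖x‖²/(4R)`, because `cos (π/2 + t) = -sin t` and `sin t ≤ t`
for `t ≥ 0`. On the half-ball `x' = 0` the tail part `x''` is `x` itself, so the disjointness is
the same estimate. -/

/-- The "tail part" `x''` of `x ∈ ℝⁿ`: the vector of the last `n − k` coordinates of `x`,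
embedded back into `ℝⁿ` by padding the first `k` coordinates with zeros. -/
noncomputable def tailPart (n k : ℕ) (x : EuclideanSpace ℝ (Fin n)) :
    EuclideanSpace ℝ (Fin n) :=
  (EuclideanSpace.equiv (Fin n) ℝ).symm (fun j => if (j : ℕ) < k then 0 else x j)

theorem neg_mul_le_mul_cos_pi_div_two_add {r t : ℝ} (hr : 0 ≤ r) (ht : 0 ≤ t) :
    -(r * t) ≤ r * cos (π / 2 + t) := by
  rw [add_comm, cos_add_pi_div_two, mul_neg, neg_le_neg_iff]
  exact mul_le_mul_of_nonneg_left (sin_le ht) hr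

section InnerProductSpace

variable {E : Type*} [NormedAddCommGroup E] [InnerProductSpace ℝ E]

theorem lt_norm_add_smul_of_neg_lt_inner {x e : E} (he : ‖e‖ = 1) {R : ℝ} (hR : 0 < R)
    (hinner : -(‖x‖ ^ 2 / (2 * R)) < ⟪x, e⟫) : R < ‖x + R • e‖ := by
  have hsq : ‖x + R • e‖ ^ 2 = ‖x‖ ^ 2 + 2 * R * ⟪x, e⟫ + R ^ 2 := by
    rw [norm_add_sq_real, real_inner_smul_right, norm_smul, he, Real.norm_of_nonneg hR.le]
    ring
  have hpos : 0 < ‖x‖ ^ 2 + 2 * R * ⟪x, e⟫ := by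
    have := mul_lt_mul_of_pos_left hinner (by positivity : 0 < 2 * R)
    rw [mul_neg, mul_div_cancel₀ _ (by positivity)] at this
    linarith
  exact lt_of_pow_lt_pow_left₀ 2 (norm_nonneg _) (by rw [hsq]; linarith)

theorem lt_norm_add_smul_of_mem_cone {x e : E} (he : ‖e‖ = 1) {R : ℝ} (hR : 0 < R) (hx : x ≠ 0)
    (hcone : ‖x‖ * cos (π / 2 + ‖x‖ / (4 * R)) ≤ ⟪x, e⟫) : R < ‖x + R • e‖ := by
  refine lt_norm_add_smul_of_neg_lt_inner he hR (lt_of_lt_of_le ?_ hcone)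
  refine lt_of_lt_of_le ?_ (neg_mul_le_mul_cos_pi_div_two_add (norm_nonneg x) (by positivity))
  have : 0 < ‖x‖ := norm_pos_iff.2 hx
  rw [neg_lt_neg_iff, ← mul_div_assoc, ← sq]
  exact div_lt_div_of_pos_left (by positivity) (by positivity) (by linarith)

end InnerProductSpace

theorem tailPart_eq_self {n k : ℕ} {y : EuclideanSpace ℝ (Fin n)}
    (hy : ∀ j : Fin n, (j : ℕ) < k → y j = 0) : tailPart n k y = y := by
  ext j
  by_cases hj : (j : ℕ) < k <;> simp [tailPart, hj, hy]

/-- Exterior sphere estimate for points on the cone of opening angle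
`ρ_d = π/2 + d/(4R₀)`: if `x` has vanishing first `k` coordinates, `‖x‖ = d`, and
`‖x‖ cos(π/2 + d/(4R₀)) ≤ x_n`, then `‖x + R₀ eₙ‖ > R₀`. Consequently the set
`𝒲 = {‖x''‖ = d} ∩ {‖x‖ cos(ρ_d) ≤ x_n}` is disjoint from the half-ball
`{x' = 0, ‖x'' + R₀ eₙ‖ ≤ R₀}`. -/
theorem cone_slice_outside_sphere
    (n k : ℕ) (hn : 1 ≤ n) (R₀ d : ℝ) (hR₀ : 0 < R₀) (hd : 0 < d)
    (x : EuclideanSpace ℝ (Fin n))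
    (hxnorm : ‖x‖ = d)
    (hcone : ‖x‖ * Real.cos (π / 2 + d / (4 * R₀)) ≤ x ⟨n - 1, by omega⟩) :
    ‖x + R₀ • EuclideanSpace.single (⟨n - 1, by omega⟩ : Fin n) (1 : ℝ)‖ > R₀ ∧
      Disjoint
        ({y : EuclideanSpace ℝ (Fin n) | ‖tailPart n k y‖ = d} ∩
          {y : EuclideanSpace ℝ (Fin n) |
            ‖y‖ * Real.cos (π / 2 + d / (4 * R₀)) ≤ y ⟨n - 1, by omega⟩})
        {y : EuclideanSpace ℝ (Fin n) | (∀ j : Fin n, (j : ℕ) < k → y j = 0) ∧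
          ‖tailPart n k y + R₀ • EuclideanSpace.single (⟨n - 1, by omega⟩ : Fin n) (1 : ℝ)‖
            ≤ R₀} := by
  set e := EuclideanSpace.single (⟨n - 1, by omega⟩ : Fin n) (1 : ℝ)
  have outside : ∀ y : EuclideanSpace ℝ (Fin n), ‖y‖ = d →
      ‖y‖ * cos (π / 2 + d / (4 * R₀)) ≤ y ⟨n - 1, by omega⟩ → R₀ < ‖y + R₀ • e‖ := by
    intro y hyd hycone
    refine lt_norm_add_smul_of_mem_cone (by simp [e]) hR₀ (norm_pos_iff.1 (hyd ▸ hd)) ?_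
    rw [EuclideanSpace.inner_single_right, one_mul, conj_trivial, hyd]
    rwa [hyd] at hycone
  refine ⟨outside x hxnorm hcone, Set.disjoint_left.2 ?_⟩
  rintro y ⟨hyd, hycone⟩ ⟨hy0, hyball⟩
  simp only [Set.mem_ofPred_eq, tailPart_eq_self hy0] at hyd hyball
  exact (outside y hyd hycone).not_ge hyball
end

section
/- Let x, y ∈ ℝⁿ with x ≠ y, and let M : Matrix (Fin n) (Fin n) ℝ be the matrix with entries M i j = 2‖x − y‖⁻⁴ (δ_{ij} − 4(x_i − y_i)(x_j − y_j)‖x − y‖⁻²). Then det M = −3 · 2ⁿ · ‖x − y‖^{−4n}; in particular det M ≠ 0. (This verifies the nondegeneracy condition (A2) for the cost c(x,y) = ‖x−y‖⁻², since M is the matrix of mixed second derivatives D_i D̄_j c(x,y).) -/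
/-! The matrix is `2‖d‖⁻⁴ (1 - 4‖d‖⁻² d dᵀ)` with `d = x - y`, a scalar multiple of a rank-one
perturbation of the identity. By the matrix determinant lemma
`det (1 + c d dᵀ) = 1 + c ‖d‖²`, which here is `1 - 4 = -3`. -/

open Matrix

theorem Matrix.det_one_add_vecMulVec {m R : Type*} [Fintype m] [DecidableEq m] [CommRing R]
    (u v : m → R) : det (1 + vecMulVec u v) = 1 + v ⬝ᵥ u := by
  rw [vecMulVec_eq Unit]
  exact det_one_add_replicateCol_mul_replicateRow u v

theorem EuclideanSpace.det_one_add_smul_vecMulVec_self {ι : Type*} [Fintype ι] [DecidableEq ι]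
    (c : ℝ) (v : EuclideanSpace ℝ ι) :
    det (1 + c • vecMulVec (⇑v) (⇑v)) = 1 + c * ‖v‖ ^ 2 := by
  rw [← smul_vecMulVec, det_one_add_vecMulVec, dotProduct_smul, ← real_inner_self_eq_norm_sq,
    EuclideanSpace.inner_eq_star_dotProduct, star_trivial, smul_eq_mul]

/-- Nondegeneracy (A2) for the cost `c(x,y) = ‖x − y‖⁻²`: the matrix of mixed second
derivatives `M i j = 2‖x − y‖⁻⁴(δ_{ij} − 4(x_i − y_i)(x_j − y_j)‖x − y‖⁻²)` has
determinant `−3 · 2ⁿ · ‖x − y‖^{−4n} ≠ 0`. -/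
theorem det_mixed_hessian_inv_square_cost
    (n : ℕ) (x y : EuclideanSpace ℝ (Fin n)) (hxy : x ≠ y)
    (M : Matrix (Fin n) (Fin n) ℝ)
    (hM : ∀ i j : Fin n,
      M i j = 2 * (‖x - y‖ ^ 4)⁻¹ *
        ((if i = j then (1 : ℝ) else 0) -
          4 * (x i - y i) * (x j - y j) * (‖x - y‖ ^ 2)⁻¹)) :
    M.det = -3 * 2 ^ n * (‖x - y‖ ^ (4 * n))⁻¹ ∧ M.det ≠ 0 := by
  have hr : ‖x - y‖ ≠ 0 := norm_ne_zero_iff.mpr (sub_ne_zero.mpr hxy)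
  have hM_eq : M = (2 * (‖x - y‖ ^ 4)⁻¹) •
      (1 + (-4 * (‖x - y‖ ^ 2)⁻¹) • vecMulVec ⇑(x - y) ⇑(x - y)) := by
    ext i j
    rw [hM i j, Matrix.smul_apply, Matrix.add_apply, Matrix.smul_apply, one_apply, vecMulVec_apply]
    simp only [PiLp.sub_apply, smul_eq_mul]
    ring
  have hdet : M.det = -3 * 2 ^ n * (‖x - y‖ ^ (4 * n))⁻¹ := by
    rw [hM_eq, det_smul, Fintype.card_fin, EuclideanSpace.det_one_add_smul_vecMulVec_self,
      mul_assoc (-4 : ℝ), inv_mul_cancel₀ (pow_ne_zero 2 hr), mul_pow, inv_pow, ← pow_mul,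
      mul_comm 4 n]
    ring
  exact ⟨hdet, hdet ▸ by positivity⟩
end

section
/- Let x, y ∈ ℝⁿ with x ≠ y, set p := 2(x − y)‖x − y‖⁻⁴, and let v ∈ ℝⁿ. Then 2‖x − y‖⁻⁴ (‖v‖² − 4⟪x − y, v⟫² ‖x − y‖⁻²) = 2^{−1/3} ‖p‖^{4/3} (‖v‖² − 4⟪p, v⟫² ‖p‖⁻²). That is, for the cost c(x,y) = ‖x−y‖⁻², the Ma–Trudinger–Wang matrix A(x,p) := −D²_{xx} c(x, cExp_x(p)) satisfies A_{ij}(x,p) v^i v^j = 2^{−1/3}‖p‖^{4/3}(‖v‖² − 4⟪p,v⟫²‖p‖⁻²). -/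
open RealInnerProductSpace

/-- Formula for the Ma–Trudinger–Wang matrix `A(x,p) = −D²_{xx} c(x, cExp_x(p))` of the
cost `c(x,y) = ‖x − y‖⁻²`: with `p = 2(x − y)‖x − y‖⁻⁴` and any `v`,
`2‖x − y‖⁻⁴(‖v‖² − 4⟪x − y, v⟫²‖x − y‖⁻²) = 2^{−1/3}‖p‖^{4/3}(‖v‖² − 4⟪p, v⟫²‖p‖⁻²)`. -/
theorem MTW_matrix_formula_inv_square_cost
    (n : ℕ) (x y : EuclideanSpace ℝ (Fin n)) (hxy : x ≠ y)
    (p : EuclideanSpace ℝ (Fin n))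
    (hp : p = (2 * (‖x - y‖ ^ 4)⁻¹) • (x - y))
    (v : EuclideanSpace ℝ (Fin n)) :
    2 * (‖x - y‖ ^ 4)⁻¹ * (‖v‖ ^ 2 - 4 * ⟪x - y, v⟫ ^ 2 * (‖x - y‖ ^ 2)⁻¹) =
      (2 : ℝ) ^ (-(1 / 3 : ℝ)) * ‖p‖ ^ ((4 : ℝ) / 3) *
        (‖v‖ ^ 2 - 4 * ⟪p, v⟫ ^ 2 * (‖p‖ ^ 2)⁻¹) := by
  have hr : (0 : ℝ) < ‖x - y‖ := by
    rw [norm_pos_iff, sub_ne_zero]; exact hxy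
  set r : ℝ := ‖x - y‖ with hrdef
  have hrne : r ≠ 0 := ne_of_gt hr
  have hnp : ‖p‖ = 2 * (r ^ 3)⁻¹ := by
    rw [hp, norm_smul]
    rw [Real.norm_eq_abs, abs_of_pos (by positivity)]
    field_simp
    ring
  have hip : ⟪p, v⟫ = 2 * (r ^ 4)⁻¹ * ⟪x - y, v⟫ := by
    rw [hp, real_inner_smul_left]
  have hrpow : ‖p‖ ^ ((4 : ℝ) / 3) = 2 ^ ((4 : ℝ) / 3) * (r ^ 4)⁻¹ := by
    rw [hnp, Real.mul_rpow (by norm_num) (by positivity)]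
    congr 1
    rw [← Real.rpow_natCast r 3, ← Real.rpow_neg_one, ← Real.rpow_natCast r 4,
      ← Real.rpow_mul hr.le, ← Real.rpow_mul hr.le, ← Real.rpow_neg_one]
    rw [← Real.rpow_mul hr.le]
    norm_num
  have h2 : (2 : ℝ) ^ (-(1 / 3 : ℝ)) * (2 : ℝ) ^ ((4 : ℝ) / 3) = 2 := by
    rw [← Real.rpow_add (by norm_num)]
    norm_num
  rw [hrpow, hip, hnp]
  rw [show (2 : ℝ) ^ (-(1 / 3 : ℝ)) * ((2 : ℝ) ^ ((4 : ℝ) / 3) * (r ^ 4)⁻¹) =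
      2 * (r ^ 4)⁻¹ by rw [← mul_assoc, h2]]
  have : ((2 * (r ^ 3)⁻¹) ^ 2)⁻¹ = r ^ 6 / 4 := by
    field_simp; ring
  rw [this]
  field_simp
  ring
end

section
/- Fix n ≥ 1 and V, η ∈ ℝⁿ, and define g : ℝⁿ → ℝ by g(p) = 2^{−1/3}(‖p‖^{4/3}‖V‖² − 4‖p‖^{−2/3}⟪p,V⟫²) for p ≠ 0. Then for every p ≠ 0, g is twice differentiable at p and its second derivative at p evaluated at (η, η) equals (2^{5/3}/3)‖p‖^{−2/3} [ ‖V‖²‖η‖² + 2‖η‖²⟪q,V⟫² − (2/3)‖V‖²⟪q,η⟫² − (16/3)⟪q,V⟫²⟪q,η⟫² − 6⟪V,η⟫² + 8⟪V,η⟫⟪q,V⟫⟪q,η⟫ ], where q := p/‖p‖. -/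
/-!
Away from the origin `g` is assembled from `‖q‖ ^ b`, whose differential is
`b ‖q‖ ^ (b - 2) ⟪q, ·⟫`, and from `⟪q, V⟫`. Hence its differential has the shape
`α(q) ⟪q, ·⟫ + β(q) ⟪V, ·⟫`, and differentiating once more gives
`D²g(p)(η, η) = α(p) ‖η‖² + Dα(p)η ⟪p, η⟫ + Dβ(p)η ⟪V, η⟫`; the stated formula follows by
writing every power of `‖p‖` as `‖p‖ ^ (-2/3)` times an integer power.
-/

open RealInnerProductSpace

open Filter Topology

theorem hasFDerivAt_fderiv_of_eventually {𝕜 E G : Type*} [NontriviallyNormedField 𝕜]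
    [NormedAddCommGroup E] [NormedSpace 𝕜 E] [NormedAddCommGroup G] [NormedSpace 𝕜 G]
    {g : E → G} {D : E → E →L[𝕜] G} {D' : E →L[𝕜] E →L[𝕜] G} {p : E}
    (hg : ∀ᶠ q in 𝓝 p, HasFDerivAt g (D q) q) (hD : HasFDerivAt D D' p) :
    HasFDerivAt (fderiv 𝕜 g) D' p :=
  hD.congr_of_eventuallyEq (hg.mono fun _ hq => hq.fderiv)

noncomputable section

variable {F : Type*} [NormedAddCommGroup F] [InnerProductSpace ℝ F]

theorem hasFDerivAt_norm_rpow_of_ne_zero (b : ℝ) {p : F} (hp : p ≠ 0) :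
    HasFDerivAt (fun q : F => ‖q‖ ^ b) ((b * ‖p‖ ^ (b - 2)) • innerSL ℝ p) p := by
  have hsq : ∀ (q : F) (c : ℝ), (‖q‖ ^ 2) ^ c = ‖q‖ ^ (2 * c) := fun q c => by
    rw [← Real.rpow_natCast, ← Real.rpow_mul (norm_nonneg q)]; norm_num
  have h := (hasFDerivAt_id p).norm_sq.rpow_const (p := b / 2)
    (Or.inl (pow_ne_zero 2 (norm_ne_zero_iff.mpr hp)))
  simp only [id, hsq, mul_div_cancel₀ b two_ne_zero] at h
  refine h.congr_fderiv ?_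
  ext u
  simp only [ContinuousLinearMap.comp_id, smul_apply, coe_innerSL_apply, nsmul_eq_mul,
    Nat.cast_ofNat, smul_eq_mul]
  ring_nf

theorem hasFDerivAt_inner_const (V p : F) : HasFDerivAt (fun q => ⟪q, V⟫) (innerSL ℝ V) p := by
  have h : (fun q => ⟪q, V⟫) = innerSL ℝ V := funext fun q => real_inner_comm V q
  exact h ▸ (innerSL ℝ V).hasFDerivAt

-- `innerSL ℝ` is typed as conjugate-linear in its first argument; over `ℝ` it is linear.
theorem HasFDerivAt.smul_innerSL_add_smul_innerSL {α β : F → ℝ} {α' β' : F →L[ℝ] ℝ} {p : F}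
    (V : F) (hα : HasFDerivAt α α' p) (hβ : HasFDerivAt β β' p) :
    HasFDerivAt (fun q => α q • innerSL ℝ q + β q • innerSL ℝ V)
      (α p • (show F →L[ℝ] F →L[ℝ] ℝ from innerSL ℝ) + α'.smulRight (innerSL ℝ p)
        + β'.smulRight (innerSL ℝ V)) p := by
  refine ((hα.smul (innerSL ℝ).hasFDerivAt).add
    (hβ.smul (hasFDerivAt_const _ p))).congr_fderiv ?_
  rw [smul_zero, zero_add, add_assoc]

namespace MTW

def contraction (V q : F) : ℝ :=
  (2 : ℝ) ^ (-(1 / 3 : ℝ)) *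
    (‖q‖ ^ ((4 : ℝ) / 3) * ‖V‖ ^ 2 - 4 * ‖q‖ ^ (-(2 / 3 : ℝ)) * ⟪q, V⟫ ^ 2)

def gradCoeffP (V q : F) : ℝ :=
  (2 : ℝ) ^ (-(1 / 3 : ℝ)) *
    (4 / 3 * ‖V‖ ^ 2 * ‖q‖ ^ (-(2 / 3 : ℝ)) + 8 / 3 * ‖q‖ ^ (-(8 / 3 : ℝ)) * ⟪q, V⟫ ^ 2)

def gradCoeffV (V q : F) : ℝ :=
  -8 * (2 : ℝ) ^ (-(1 / 3 : ℝ)) * (‖q‖ ^ (-(2 / 3 : ℝ)) * ⟪q, V⟫)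

def differential (V q : F) : F →L[ℝ] ℝ :=
  gradCoeffP V q • innerSL ℝ q + gradCoeffV V q • innerSL ℝ V

theorem hasFDerivAt_contraction (V : F) {q : F} (hq : q ≠ 0) :
    HasFDerivAt (contraction V) (differential V q) q := by
  have h : HasFDerivAt (contraction V) _ q :=
    (((hasFDerivAt_norm_rpow_of_ne_zero _ hq).mul_const _).sub
      (((hasFDerivAt_norm_rpow_of_ne_zero _ hq).const_mul 4).mul
        ((hasFDerivAt_inner_const V q).pow 2))).const_mul _
  refine h.congr_fderiv ?_
  have e₁ : (4 : ℝ) / 3 - 2 = -(2 / 3) := by norm_num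
  have e₂ : -(2 / 3 : ℝ) - 2 = -(8 / 3) := by norm_num
  ext u
  simp only [differential, gradCoeffP, gradCoeffV, e₁, e₂, Nat.add_one_sub_one, pow_one,
    nsmul_eq_mul, Nat.cast_ofNat, add_apply, sub_apply, smul_apply, coe_innerSL_apply, smul_eq_mul]
  ring

theorem exists_hasFDerivAt_differential (V : F) {p : F} (hp : p ≠ 0) :
    ∃ D : F →L[ℝ] F →L[ℝ] ℝ, HasFDerivAt (differential V) D p ∧ ∀ η : F,
      D η η = (2 : ℝ) ^ ((5 : ℝ) / 3) / 3 * ‖p‖ ^ (-(2 / 3 : ℝ)) *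
        (‖V‖ ^ 2 * ‖η‖ ^ 2
          + 2 * ‖η‖ ^ 2 * ⟪‖p‖⁻¹ • p, V⟫ ^ 2
          - 2 / 3 * ‖V‖ ^ 2 * ⟪‖p‖⁻¹ • p, η⟫ ^ 2
          - 16 / 3 * ⟪‖p‖⁻¹ • p, V⟫ ^ 2 * ⟪‖p‖⁻¹ • p, η⟫ ^ 2
          - 6 * ⟪V, η⟫ ^ 2
          + 8 * ⟪V, η⟫ * ⟪‖p‖⁻¹ • p, V⟫ * ⟪‖p‖⁻¹ • p, η⟫) := by
  have hP : HasFDerivAt (gradCoeffP V) _ p :=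
    (((hasFDerivAt_norm_rpow_of_ne_zero _ hp).const_mul _).add
      (((hasFDerivAt_norm_rpow_of_ne_zero _ hp).const_mul _).mul
        ((hasFDerivAt_inner_const V p).pow 2))).const_mul _
  have hV : HasFDerivAt (gradCoeffV V) _ p :=
    ((hasFDerivAt_norm_rpow_of_ne_zero _ hp).mul (hasFDerivAt_inner_const V p)).const_mul _
  refine ⟨_, hP.smul_innerSL_add_smul_innerSL V hV, fun η => ?_⟩
  have hr : 0 < ‖p‖ := norm_pos_iff.mpr hp
  have e₁ : -(2 / 3 : ℝ) - 2 = -(8 / 3) := by norm_num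
  have e₂ : -(8 / 3 : ℝ) - 2 = -(14 / 3) := by norm_num
  have h₈ : ‖p‖ ^ (-(8 / 3 : ℝ)) = ‖p‖ ^ (-(2 / 3 : ℝ)) / ‖p‖ ^ 2 := by
    rw [← Real.rpow_two, ← Real.rpow_sub hr]; norm_num
  have h₁₄ : ‖p‖ ^ (-(14 / 3 : ℝ)) = ‖p‖ ^ (-(2 / 3 : ℝ)) / ‖p‖ ^ 4 := by
    rw [← Real.rpow_natCast, ← Real.rpow_sub hr]; norm_num
  have h₅ : (2 : ℝ) ^ ((5 : ℝ) / 3) = 4 * (2 : ℝ) ^ (-(1 / 3 : ℝ)) := by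
    rw [show (5 : ℝ) / 3 = 2 + -(1 / 3) by norm_num, Real.rpow_add two_pos, Real.rpow_two]
    norm_num
  have hη : (show F →L[ℝ] F →L[ℝ] ℝ from innerSL ℝ) η η = ‖η‖ ^ 2 := real_inner_self_eq_norm_sq η
  simp only [gradCoeffP, h₈, e₁, e₂, h₁₄, h₅, Nat.add_one_sub_one, pow_one, nsmul_eq_mul,
    Nat.cast_ofNat, add_apply, smul_apply, ContinuousLinearMap.smulRight_apply, coe_innerSL_apply,
    smul_eq_mul, hη, real_inner_smul_left]
  field_simp
  ring

end MTW

end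

theorem second_derivative_MTW_contraction_general
    (n : ℕ) (V η : EuclideanSpace ℝ (Fin n))
    (g : EuclideanSpace ℝ (Fin n) → ℝ)
    (hg : ∀ q : EuclideanSpace ℝ (Fin n), q ≠ 0 →
      g q = (2 : ℝ) ^ (-(1 / 3 : ℝ)) *
        (‖q‖ ^ ((4 : ℝ) / 3) * ‖V‖ ^ 2 - 4 * ‖q‖ ^ (-(2 / 3 : ℝ)) * ⟪q, V⟫ ^ 2))
    (p : EuclideanSpace ℝ (Fin n)) (hp : p ≠ 0) :
    DifferentiableAt ℝ g p ∧
    DifferentiableAt ℝ (fun q => fderiv ℝ g q) p ∧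
    fderiv ℝ (fun q => fderiv ℝ g q) p η η =
      (2 : ℝ) ^ ((5 : ℝ) / 3) / 3 * ‖p‖ ^ (-(2 / 3 : ℝ)) *
        (‖V‖ ^ 2 * ‖η‖ ^ 2
          + 2 * ‖η‖ ^ 2 * ⟪‖p‖⁻¹ • p, V⟫ ^ 2
          - 2 / 3 * ‖V‖ ^ 2 * ⟪‖p‖⁻¹ • p, η⟫ ^ 2
          - 16 / 3 * ⟪‖p‖⁻¹ • p, V⟫ ^ 2 * ⟪‖p‖⁻¹ • p, η⟫ ^ 2
          - 6 * ⟪V, η⟫ ^ 2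
          + 8 * ⟪V, η⟫ * ⟪‖p‖⁻¹ • p, V⟫ * ⟪‖p‖⁻¹ • p, η⟫) := by
  have hg_near : ∀ q ≠ 0, g =ᶠ[𝓝 q] MTW.contraction V := fun q hq =>
    (eventually_ne_nhds hq).mono fun x hx => hg x hx
  have hDg : ∀ᶠ q in 𝓝 p, HasFDerivAt g (MTW.differential V q) q :=
    (eventually_ne_nhds hp).mono fun q hq =>
      (MTW.hasFDerivAt_contraction V hq).congr_of_eventuallyEq (hg_near q hq)
  obtain ⟨D, hD, hD_diag⟩ := MTW.exists_hasFDerivAt_differential V hp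
  have hD2g := hasFDerivAt_fderiv_of_eventually hDg hD
  exact ⟨hDg.self_of_nhds.differentiableAt, hD2g.differentiableAt, by rw [hD2g.fderiv, hD_diag]⟩

/-- The central second-derivative computation of Lemma A.1: let
`g(p) = 2^{−1/3}(‖p‖^{4/3}‖V‖² − 4‖p‖^{−2/3}⟪p,V⟫²)` for `p ≠ 0` (this is the MTW matrix
of the cost `‖x − y‖⁻²` contracted twice with `V`). Then for every `p ≠ 0`, `g` is twice
differentiable at `p` and its second derivative at `p` evaluated at `(η, η)` equals
`(2^{5/3}/3)‖p‖^{−2/3}[‖V‖²‖η‖² + 2‖η‖²⟪q,V⟫² − (2/3)‖V‖²⟪q,η⟫² − (16/3)⟪q,V⟫²⟪q,η⟫²`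
`− 6⟪V,η⟫² + 8⟪V,η⟫⟪q,V⟫⟪q,η⟫]` where `q = p/‖p‖`. -/
theorem second_derivative_MTW_contraction
    (n : ℕ) (hn : 1 ≤ n) (V η : EuclideanSpace ℝ (Fin n))
    (g : EuclideanSpace ℝ (Fin n) → ℝ)
    (hg : ∀ q : EuclideanSpace ℝ (Fin n), q ≠ 0 →
      g q = (2 : ℝ) ^ (-(1 / 3 : ℝ)) *
        (‖q‖ ^ ((4 : ℝ) / 3) * ‖V‖ ^ 2 - 4 * ‖q‖ ^ (-(2 / 3 : ℝ)) * ⟪q, V⟫ ^ 2))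
    (p : EuclideanSpace ℝ (Fin n)) (hp : p ≠ 0) :
    DifferentiableAt ℝ g p ∧
    DifferentiableAt ℝ (fun q => fderiv ℝ g q) p ∧
    fderiv ℝ (fun q => fderiv ℝ g q) p η η =
      (2 : ℝ) ^ ((5 : ℝ) / 3) / 3 * ‖p‖ ^ (-(2 / 3 : ℝ)) *
        (‖V‖ ^ 2 * ‖η‖ ^ 2
          + 2 * ‖η‖ ^ 2 * ⟪‖p‖⁻¹ • p, V⟫ ^ 2
          - 2 / 3 * ‖V‖ ^ 2 * ⟪‖p‖⁻¹ • p, η⟫ ^ 2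
          - 16 / 3 * ⟪‖p‖⁻¹ • p, V⟫ ^ 2 * ⟪‖p‖⁻¹ • p, η⟫ ^ 2
          - 6 * ⟪V, η⟫ ^ 2
          + 8 * ⟪V, η⟫ * ⟪‖p‖⁻¹ • p, V⟫ * ⟪‖p‖⁻¹ • p, η⟫) :=
  second_derivative_MTW_contraction_general n V η g hg p hp
end

section
/- Let E be a real inner product space and let q, V, η ∈ E with ‖q‖ = 1 and ⟪V, η⟫ = 0. Then ‖V‖²‖η‖² + 2‖η‖²⟪q,V⟫² − (2/3)‖V‖²⟪q,η⟫² − (16/3)⟪q,V⟫²⟪q,η⟫² ≥ 0. -/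
set_option maxHeartbeats 1000000


open RealInnerProductSpace

/-- The algebraic inequality verifying the Ma–Trudinger–Wang condition (MTW) for the cost
`c(x,y) = ‖x − y‖⁻²`: for a unit vector `q` and orthogonal vectors `V, η`,
`‖V‖²‖η‖² + 2‖η‖²⟪q,V⟫² − (2/3)‖V‖²⟪q,η⟫² − (16/3)⟪q,V⟫²⟪q,η⟫² ≥ 0`. -/
theorem MTW_algebraic_inequality
    {E : Type*} [NormedAddCommGroup E] [InnerProductSpace ℝ E]
    (q V η : E) (hq : ‖q‖ = 1) (horth : ⟪V, η⟫ = 0) :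
    0 ≤ ‖V‖ ^ 2 * ‖η‖ ^ 2 + 2 * ‖η‖ ^ 2 * ⟪q, V⟫ ^ 2
        - 2 / 3 * ‖V‖ ^ 2 * ⟪q, η⟫ ^ 2
        - 16 / 3 * ⟪q, V⟫ ^ 2 * ⟪q, η⟫ ^ 2 := by
  set A : ℝ := ‖V‖ ^ 2 with hA
  set B : ℝ := ‖η‖ ^ 2 with hB
  set a : ℝ := ⟪q, V⟫ with ha
  set b : ℝ := ⟪q, η⟫ with hb
  have horth' : ⟪η, V⟫ = 0 := by rw [real_inner_comm]; exact horth
  have hqV : ⟪V, q⟫ = a := (real_inner_comm V q).symm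
  have hqη : ⟪η, q⟫ = b := (real_inner_comm η q).symm
  have hqq : ⟪q, q⟫ = 1 := by
    rw [real_inner_self_eq_norm_sq, hq]; norm_num
  have hVV : ⟪V, V⟫ = A := real_inner_self_eq_norm_sq V
  have hηη : ⟪η, η⟫ = B := real_inner_self_eq_norm_sq η
  have ha2 : a ^ 2 ≤ A := by
    have h1 : |a| ≤ ‖q‖ * ‖V‖ := abs_real_inner_le_norm q V
    rw [hq, one_mul] at h1
    calc a ^ 2 = |a| ^ 2 := (sq_abs a).symm
      _ ≤ ‖V‖ ^ 2 := by nlinarith [abs_nonneg a]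
  have hb2 : b ^ 2 ≤ B := by
    have h1 : |b| ≤ ‖q‖ * ‖η‖ := abs_real_inner_le_norm q η
    rw [hq, one_mul] at h1
    calc b ^ 2 = |b| ^ 2 := (sq_abs b).symm
      _ ≤ ‖η‖ ^ 2 := by nlinarith [abs_nonneg b]
  have hA0 : 0 ≤ A := sq_nonneg _
  have hB0 : 0 ≤ B := sq_nonneg _
  clear_value A B a b
  have key : 0 ≤ A * B * (A * B) - A * B * (B * a ^ 2 + A * b ^ 2) := by
    have h := real_inner_self_nonneg
      (x := (A * B) • q - (B * a) • V - (A * b) • η)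
    simp only [inner_sub_left, inner_sub_right, inner_smul_left, inner_smul_right,
      RCLike.conj_to_real, hqq, hVV, hηη, hqV, hqη, horth, horth'] at h
    rw [← ha, ← hb] at h
    nlinarith [h]
  by_cases hV0 : A = 0
  · have haz : a = 0 := by nlinarith [sq_nonneg a]
    rw [hV0, haz]; ring_nf; positivity
  · by_cases hη0 : B = 0
    · have hbz : b = 0 := by nlinarith [sq_nonneg b]
      rw [hη0, hbz]; ring_nf; try norm_num
    · have hApos : 0 < A := lt_of_le_of_ne hA0 (Ne.symm hV0)
      have hBpos : 0 < B := lt_of_le_of_ne hB0 (Ne.symm hη0)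
      have h1 : 0 ≤ A * B - (B * a ^ 2 + A * b ^ 2) := by
        have hABpos : 0 < A * B := mul_pos hApos hBpos
        nlinarith [key]
      have h2 : 0 ≤ (A * B + 2 * B * a ^ 2 - 2 / 3 * A * b ^ 2
          - 16 / 3 * a ^ 2 * b ^ 2) * A := by
        nlinarith [mul_nonneg (by nlinarith [sq_nonneg a] : (0:ℝ) ≤ 2 * A + 16 * a ^ 2) h1,
          mul_nonneg hB0 (sq_nonneg (A - 4 * a ^ 2))]
      nlinarith [h2, hApos]
end

section
/- Fix n ≥ 1 and V, η ∈ ℝⁿ with ⟪V, η⟫ = 0, and define g : ℝⁿ → ℝ by g(p) = 2^{−1/3}(‖p‖^{4/3}‖V‖² − 4‖p‖^{−2/3}⟪p,V⟫²) for p ≠ 0. Then for every p ≠ 0, the second derivative of g at p evaluated at (η, η) is nonnegative. (This says that the cost c(x,y) = ‖x−y‖⁻² satisfies the Ma–Trudinger–Wang condition (MTW): D²_{p_k p_l} A_{ij}(x,p) V^i V^j η_k η_l ≥ 0 whenever ⟪V,η⟫ = 0.) -/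
/-!
Near `p ≠ 0`, `g` agrees with a smooth function, so `D²g(p)(η, η)` is the second derivative at
`0` of `t ↦ g (p + t • η)`. Because `η ⊥ V`, the factor `⟪p + t • η, V⟫` is constant along this
line, so the restriction is a function of `‖p + t • η‖²` alone, and its second derivative is a
positive multiple of `3hvs² + 6ha²s - 2t²vs - 16a²t²`, where `s = ‖p‖²`, `v = ‖V‖²`,
`h = ‖η‖²`, `a = ⟪p, V⟫`, `t = ⟪p, η⟫`. Bessel's inequality `a²h + t²v ≤ svh` for the orthogonal
pair `V, η` makes this nonnegative, since `v` times it equals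
`h (vs - 4a²)² + (2sv + 16a²)(svh - a²h - t²v)`.
-/

open RealInnerProductSpace Filter Topology

theorem hasDerivAt_add_smul {E : Type*} [NormedAddCommGroup E] [NormedSpace ℝ E] (x v : E)
    (t : ℝ) : HasDerivAt (fun t : ℝ => x + t • v) v t := by
  simpa using ((hasDerivAt_id t).smul_const v).const_add x

theorem fderiv_fderiv_apply_self_eq_deriv_deriv {E F : Type*} [NormedAddCommGroup E]
    [NormedSpace ℝ E] [NormedAddCommGroup F] [NormedSpace ℝ F] {f : E → F} {x : E}
    (hf : ContDiffAt ℝ 2 f x) (v : E) :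
    fderiv ℝ (fderiv ℝ f) x v v = deriv (deriv fun t : ℝ => f (x + t • v)) 0 := by
  have hline : Tendsto (fun t : ℝ => x + t • v) (𝓝 0) (𝓝 x) := by
    simpa using (hasDerivAt_add_smul x v 0).continuousAt.tendsto
  have hdiff : ∀ᶠ t in 𝓝 (0 : ℝ), DifferentiableAt ℝ f (x + t • v) :=
    hline.eventually ((hf.eventually (by simp)).mono fun y hy => hy.differentiableAt two_ne_zero)
  have hderiv : deriv (fun t : ℝ => f (x + t • v)) =ᶠ[𝓝 0] fun t => fderiv ℝ f (x + t • v) v :=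
    hdiff.mono fun t ht => (ht.hasFDerivAt.comp_hasDerivAt t (hasDerivAt_add_smul x v t)).deriv
  have hf' : HasFDerivAt (fderiv ℝ f) (fderiv ℝ (fderiv ℝ f) x) (x + (0 : ℝ) • v) := by
    rw [zero_smul, add_zero]
    exact ((hf.fderiv_right one_add_one_eq_two.le).differentiableAt one_ne_zero).hasFDerivAt
  have hderiv' : HasDerivAt (fun t : ℝ => fderiv ℝ f (x + t • v) v)
      (fderiv ℝ (fderiv ℝ f) x v v) 0 := by
    have hcomp := hf'.comp_hasDerivAt (0 : ℝ) (hasDerivAt_add_smul x v 0)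
    simpa only [Function.comp_apply, map_zero, add_zero] using
      hcomp.clm_apply (hasDerivAt_const (0 : ℝ) v)
  rw [hderiv.deriv_eq, hderiv'.deriv]

theorem deriv_deriv_comp_of_hasDerivAt {F F' u u' : ℝ → ℝ} {F'' u'' x : ℝ}
    (hF : ∀ᶠ y in 𝓝 (u x), HasDerivAt F (F' y) y) (hF' : HasDerivAt F' F'' (u x))
    (hu : ∀ᶠ y in 𝓝 x, HasDerivAt u (u' y) y) (hu' : HasDerivAt u' u'' x) :
    deriv (deriv (F ∘ u)) x = F'' * u' x ^ 2 + F' (u x) * u'' := by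
  have hFu : ∀ᶠ y in 𝓝 x, HasDerivAt F (F' (u y)) (u y) :=
    hu.self_of_nhds.continuousAt.tendsto.eventually hF
  have hderiv : deriv (F ∘ u) =ᶠ[𝓝 x] fun y => F' (u y) * u' y :=
    (hFu.and hu).mono fun y hy => (hy.1.comp y hy.2).deriv
  have hprod : HasDerivAt (fun y => F' (u y) * u' y) (F'' * u' x * u' x + F' (u x) * u'') x :=
    (hF'.comp x hu.self_of_nhds).mul hu'
  rw [hderiv.deriv_eq, hprod.deriv]
  ring

noncomputable def mtwProfile (A B y : ℝ) : ℝ :=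
  A * y ^ ((2 : ℝ) / 3) - B * y ^ (-(1 / 3 : ℝ))

theorem hasDerivAt_mtwProfile (A B : ℝ) {y : ℝ} (hy : 0 < y) :
    HasDerivAt (mtwProfile A B)
      (2 / 3 * A * y ^ (-(1 / 3 : ℝ)) + 1 / 3 * B * y ^ (-(4 / 3 : ℝ))) y := by
  refine (((Real.hasDerivAt_rpow_const (Or.inl hy.ne')).const_mul A).sub
    ((Real.hasDerivAt_rpow_const (Or.inl hy.ne')).const_mul B)).congr_deriv ?_
  norm_num
  ring

theorem hasDerivAt_deriv_mtwProfile (A B : ℝ) {y : ℝ} (hy : 0 < y) :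
    HasDerivAt (fun y => 2 / 3 * A * y ^ (-(1 / 3 : ℝ)) + 1 / 3 * B * y ^ (-(4 / 3 : ℝ)))
      (-(2 / 9) * A * y ^ (-(4 / 3 : ℝ)) - 4 / 9 * B * y ^ (-(7 / 3 : ℝ))) y := by
  refine (((Real.hasDerivAt_rpow_const (Or.inl hy.ne')).const_mul _).add
    ((Real.hasDerivAt_rpow_const (Or.inl hy.ne')).const_mul _)).congr_deriv ?_
  norm_num
  ring

variable {E : Type*} [NormedAddCommGroup E] [InnerProductSpace ℝ E]

/-- `A_{ij}(x, p) V^i V^j` for the cost `c(x, y) = ‖x - y‖⁻²`; it does not depend on `x`. -/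
noncomputable def mtwContraction (V q : E) : ℝ :=
  (2 : ℝ) ^ (-(1 / 3 : ℝ)) *
    (‖q‖ ^ ((4 : ℝ) / 3) * ‖V‖ ^ 2 - 4 * ‖q‖ ^ (-(2 / 3 : ℝ)) * ⟪q, V⟫ ^ 2)

theorem contDiffAt_mtwContraction (V : E) {q : E} (hq : q ≠ 0) {n : WithTop ℕ∞} :
    ContDiffAt ℝ n (mtwContraction V) q := by
  have hnorm : ContDiffAt ℝ n (‖·‖) q := contDiffAt_norm ℝ hq
  have hne : ‖q‖ ≠ 0 := norm_ne_zero_iff.2 hq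
  exact contDiffAt_const.mul (((hnorm.rpow_const_of_ne hne).mul contDiffAt_const).sub
    ((contDiffAt_const.mul (hnorm.rpow_const_of_ne hne)).mul
      ((contDiffAt_id.inner ℝ contDiffAt_const).pow 2)))

theorem mtwContraction_eq_mtwProfile (V q : E) :
    mtwContraction V q =
      (2 : ℝ) ^ (-(1 / 3 : ℝ)) * mtwProfile (‖V‖ ^ 2) (4 * ⟪q, V⟫ ^ 2) (‖q‖ ^ 2) := by
  have hsq (r : ℝ) : (‖q‖ ^ 2) ^ r = ‖q‖ ^ (2 * r) := by
    rw [← Real.rpow_natCast, ← Real.rpow_mul (norm_nonneg _), Nat.cast_ofNat]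
  rw [mtwContraction, mtwProfile, hsq, hsq]
  norm_num
  ring

theorem deriv_deriv_mtwContraction_add_smul {V η : E} (horth : ⟪V, η⟫ = 0) {p : E}
    (hp : p ≠ 0) :
    deriv (deriv fun t : ℝ => mtwContraction V (p + t • η)) 0 =
      (2 : ℝ) ^ (-(1 / 3 : ℝ)) * (4 / 9) * (‖p‖ ^ 2) ^ (-(7 / 3 : ℝ)) *
        (3 * ‖η‖ ^ 2 * ‖V‖ ^ 2 * (‖p‖ ^ 2) ^ 2 + 6 * ‖η‖ ^ 2 * ⟪p, V⟫ ^ 2 * ‖p‖ ^ 2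
          - 2 * ⟪p, η⟫ ^ 2 * ‖V‖ ^ 2 * ‖p‖ ^ 2 - 16 * ⟪p, V⟫ ^ 2 * ⟪p, η⟫ ^ 2) := by
  set c : ℝ := (2 : ℝ) ^ (-(1 / 3 : ℝ))
  set A := ‖V‖ ^ 2
  set B := 4 * ⟪p, V⟫ ^ 2
  have hs : 0 < ‖p‖ ^ 2 := pow_pos (norm_pos_iff.2 hp) 2
  have hu0 : ‖p + (0 : ℝ) • η‖ ^ 2 = ‖p‖ ^ 2 := by rw [zero_smul, add_zero]
  have hline : (fun t : ℝ => mtwContraction V (p + t • η)) =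
      (fun y => c * mtwProfile A B y) ∘ fun t : ℝ => ‖p + t • η‖ ^ 2 := by
    ext t
    rw [Function.comp_apply, mtwContraction_eq_mtwProfile, inner_add_left, real_inner_smul_left,
      real_inner_comm V η, horth, mul_zero, add_zero]
  have hF : ∀ᶠ y in 𝓝 (‖p + (0 : ℝ) • η‖ ^ 2), HasDerivAt (fun y => c * mtwProfile A B y)
      (c * (2 / 3 * A * y ^ (-(1 / 3 : ℝ)) + 1 / 3 * B * y ^ (-(4 / 3 : ℝ)))) y := by
    rw [hu0]
    filter_upwards [lt_mem_nhds hs] with y hy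
    exact (hasDerivAt_mtwProfile A B hy).const_mul c
  have hF' := (hasDerivAt_deriv_mtwProfile A B (hu0 ▸ hs)).const_mul c
  have hu (t : ℝ) : HasDerivAt (fun t : ℝ => ‖p + t • η‖ ^ 2) (2 * ⟪p + t • η, η⟫) t :=
    (hasDerivAt_add_smul p η t).norm_sq
  have hu' : HasDerivAt (fun t : ℝ => 2 * ⟪p + t • η, η⟫) (2 * ‖η‖ ^ 2) 0 := by
    simpa using ((hasDerivAt_add_smul p η 0).inner ℝ (hasDerivAt_const 0 η)).const_mul 2
  have hpow (k : ℕ) (r : ℝ) (hr : r = -(7 / 3) + k) :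
      (‖p‖ ^ 2) ^ r = (‖p‖ ^ 2) ^ (-(7 / 3 : ℝ)) * (‖p‖ ^ 2) ^ k := by
    rw [hr, Real.rpow_add hs, Real.rpow_natCast]
  rw [hline, deriv_deriv_comp_of_hasDerivAt (u := fun t : ℝ => ‖p + t • η‖ ^ 2) hF hF'
      (.of_forall hu) hu', hu0, zero_smul, add_zero,
    hpow 2 (-(1 / 3)) (by norm_num), hpow 1 (-(4 / 3)) (by norm_num)]
  ring

theorem sq_inner_mul_norm_sq_add_sq_inner_mul_norm_sq_le {V η : E} (horth : ⟪V, η⟫ = 0) (p : E) :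
    ⟪p, V⟫ ^ 2 * ‖η‖ ^ 2 + ⟪p, η⟫ ^ 2 * ‖V‖ ^ 2 ≤ ‖p‖ ^ 2 * ‖V‖ ^ 2 * ‖η‖ ^ 2 := by
  rcases eq_or_ne V 0 with rfl | hV
  · simp
  rcases eq_or_ne η 0 with rfl | hη
  · simp
  refine le_of_mul_le_mul_left ?_ (by positivity : 0 < ‖V‖ ^ 2 * ‖η‖ ^ 2)
  have := real_inner_self_nonneg
    (x := (‖V‖ ^ 2 * ‖η‖ ^ 2) • p - (⟪p, V⟫ * ‖η‖ ^ 2) • V - (⟪p, η⟫ * ‖V‖ ^ 2) • η)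
  simp only [inner_sub_left, inner_sub_right, real_inner_smul_left, real_inner_smul_right,
    real_inner_comm p, horth, real_inner_comm V η] at this
  simp only [real_inner_self_eq_norm_sq] at this
  linear_combination this

theorem mtw_quartic_nonneg {s v h a t : ℝ} (hs : 0 ≤ s) (hh : 0 ≤ h) (hv : 0 ≤ v)
    (hcs : a ^ 2 ≤ s * v) (hbessel : a ^ 2 * h + t ^ 2 * v ≤ s * v * h) :
    0 ≤ 3 * h * v * s ^ 2 + 6 * h * a ^ 2 * s - 2 * t ^ 2 * v * s - 16 * a ^ 2 * t ^ 2 := by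
  rcases hv.eq_or_lt with rfl | hv
  · obtain rfl : a = 0 := pow_eq_zero_iff two_ne_zero |>.mp (by nlinarith [sq_nonneg a])
    simp
  refine nonneg_of_mul_nonneg_right ?_ hv
  have key : v * (3 * h * v * s ^ 2 + 6 * h * a ^ 2 * s - 2 * t ^ 2 * v * s - 16 * a ^ 2 * t ^ 2)
      = h * (v * s - 4 * a ^ 2) ^ 2
        + (2 * s * v + 16 * a ^ 2) * (s * v * h - a ^ 2 * h - t ^ 2 * v) := by
    ring
  rw [key]
  exact add_nonneg (by positivity) (mul_nonneg (by positivity) (by linarith))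

theorem MTW_condition_inv_square_cost_general
    (n : ℕ) (V η : EuclideanSpace ℝ (Fin n)) (horth : ⟪V, η⟫ = 0)
    (g : EuclideanSpace ℝ (Fin n) → ℝ)
    (hg : ∀ q : EuclideanSpace ℝ (Fin n), q ≠ 0 →
      g q = (2 : ℝ) ^ (-(1 / 3 : ℝ)) *
        (‖q‖ ^ ((4 : ℝ) / 3) * ‖V‖ ^ 2 - 4 * ‖q‖ ^ (-(2 / 3 : ℝ)) * ⟪q, V⟫ ^ 2))
    (p : EuclideanSpace ℝ (Fin n)) (hp : p ≠ 0) :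
    0 ≤ fderiv ℝ (fun q => fderiv ℝ g q) p η η := by
  have hg_eq : g =ᶠ[𝓝 p] mtwContraction V := (eventually_ne_nhds hp).mono hg
  have hcs : ⟪p, V⟫ ^ 2 ≤ ‖p‖ ^ 2 * ‖V‖ ^ 2 := by
    rw [← mul_pow, ← sq_abs]
    exact pow_le_pow_left₀ (abs_nonneg _) (abs_real_inner_le_norm p V) 2
  rw [hg_eq.fderiv.fderiv_eq,
    fderiv_fderiv_apply_self_eq_deriv_deriv (contDiffAt_mtwContraction V hp) η,
    deriv_deriv_mtwContraction_add_smul horth hp]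
  exact mul_nonneg (by positivity) (mtw_quartic_nonneg (by positivity) (by positivity)
    (by positivity) hcs (by linarith [sq_inner_mul_norm_sq_add_sq_inner_mul_norm_sq_le horth p]))

/-- The (MTW) assertion of Lemma A.1: the cost `c(x,y) = ‖x − y‖⁻²` satisfies the
Ma–Trudinger–Wang condition. With
`g(p) = 2^{−1/3}(‖p‖^{4/3}‖V‖² − 4‖p‖^{−2/3}⟪p,V⟫²)` for `p ≠ 0` (the MTW matrix
contracted twice with `V`), for every `p ≠ 0` and every `η` with `⟪V, η⟫ = 0`, the second
derivative of `g` at `p` evaluated at `(η, η)` is nonnegative. -/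
theorem MTW_condition_inv_square_cost
    (n : ℕ) (hn : 1 ≤ n) (V η : EuclideanSpace ℝ (Fin n)) (horth : ⟪V, η⟫ = 0)
    (g : EuclideanSpace ℝ (Fin n) → ℝ)
    (hg : ∀ q : EuclideanSpace ℝ (Fin n), q ≠ 0 →
      g q = (2 : ℝ) ^ (-(1 / 3 : ℝ)) *
        (‖q‖ ^ ((4 : ℝ) / 3) * ‖V‖ ^ 2 - 4 * ‖q‖ ^ (-(2 / 3 : ℝ)) * ⟪q, V⟫ ^ 2))
    (p : EuclideanSpace ℝ (Fin n)) (hp : p ≠ 0) :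
    0 ≤ fderiv ℝ (fun q => fderiv ℝ g q) p η η :=
  MTW_condition_inv_square_cost_general n V η horth g hg p hp
end

section
/- Let n ≥ 2 and let V, η ∈ ℝⁿ be orthonormal (‖V‖ = ‖η‖ = 1, ⟪V,η⟫ = 0). Define g : ℝⁿ → ℝ by g(p) = 2^{−1/3}(‖p‖^{4/3} − 4‖p‖^{−2/3}⟪p,V⟫²) for p ≠ 0, and set p := (1/2)V + (√3/2)η. Then the second derivative of g at p evaluated at (η, η) equals 0. (Hence the cost c(x,y) = ‖x−y‖⁻² does not satisfy the strict condition (MTW₊): there exist p ≠ 0 and orthogonal unit vectors V, η for which the MTW quantity vanishes.) -/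
/-!
Away from `0`, `g` is given by a smooth formula. For `η ⟂ V` its derivative in the direction `η` is
`2^{-1/3} (4/3 ‖q‖^{-2/3} + 8/3 ‖q‖^{-8/3} ⟪q,V⟫²) ⟪q,η⟫`, and differentiating once more along `η`
gives an explicit expression in `‖q‖`, `⟪q,η⟫`, `⟪q,V⟫` and `‖η‖`. At `p` we have `‖p‖ = 1`,
`⟪p,V⟫ = 1/2` and `⟪p,η⟫ = √3/2`, and its four terms become `4/3 - 2/3 - 4/3 + 2/3 = 0`.
-/

open RealInnerProductSpace Real Topology

theorem fderiv_clm_apply_const_apply {𝕜 E F G : Type*} [NontriviallyNormedField 𝕜]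
    [NormedAddCommGroup E] [NormedSpace 𝕜 E] [NormedAddCommGroup F] [NormedSpace 𝕜 F]
    [NormedAddCommGroup G] [NormedSpace 𝕜 G] {c : E → F →L[𝕜] G} {x : E}
    (hc : DifferentiableAt 𝕜 c x) (v : F) (w : E) :
    fderiv 𝕜 (fun y ↦ c y v) x w = fderiv 𝕜 c x w v := by
  simp [fderiv_clm_apply hc (differentiableAt_const v)]

section InnerProductSpace

variable {E : Type*} [NormedAddCommGroup E] [InnerProductSpace ℝ E]

theorem hasStrictFDerivAt_norm_rpow_of_ne_zero {x : E} (hx : x ≠ 0) (a : ℝ) :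
    HasStrictFDerivAt (fun y : E ↦ ‖y‖ ^ a) ((a * ‖x‖ ^ (a - 2)) • innerSL ℝ x) x := by
  convert (hasStrictFDerivAt_norm_sq x).rpow_const (p := a / 2) (by simp [hx]) using 0
  simp_rw [← Real.rpow_natCast_mul (norm_nonneg _), ← Nat.cast_smul_eq_nsmul ℝ, smul_smul]
  ring_nf

theorem hasFDerivAt_inner_const_right (v x : E) :
    HasFDerivAt (fun y : E ↦ ⟪y, v⟫) (innerSL ℝ v) x :=
  (innerSL ℝ v).hasFDerivAt.congr_of_eventuallyEq (.of_forall fun y ↦ real_inner_comm v y)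

/-- The formula for `g`, taken on all of `E`; only its values away from `0` matter. -/
noncomputable def invSqCostMTW (V q : E) : ℝ :=
  (2 : ℝ) ^ (-(1 / 3 : ℝ)) * (‖q‖ ^ ((4 : ℝ) / 3) - 4 * ‖q‖ ^ (-(2 / 3 : ℝ)) * ⟪q, V⟫ ^ 2)

variable (V : E) {q : E}

theorem contDiffAt_invSqCostMTW (hq : q ≠ 0) : ContDiffAt ℝ 2 (invSqCostMTW V) q := by
  have hn : ContDiffAt ℝ 2 (fun y : E ↦ ‖y‖) q := contDiffAt_norm ℝ hq
  have hn0 : ‖q‖ ≠ 0 := norm_ne_zero_iff.mpr hq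
  have hV : ContDiffAt ℝ 2 (fun y : E ↦ ⟪y, V⟫) q := contDiffAt_id.inner ℝ contDiffAt_const
  exact contDiffAt_const.mul ((hn.rpow_const_of_ne hn0).sub
    ((contDiffAt_const.mul (hn.rpow_const_of_ne hn0)).mul (hV.pow 2)))

theorem fderiv_invSqCostMTW_apply (hq : q ≠ 0) (w : E) :
    fderiv ℝ (invSqCostMTW V) q w = (2 : ℝ) ^ (-(1 / 3 : ℝ)) *
      ((4 / 3 * ‖q‖ ^ (-(2 / 3 : ℝ)) + 8 / 3 * ‖q‖ ^ (-(8 / 3 : ℝ)) * ⟪q, V⟫ ^ 2) * ⟪q, w⟫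
        - 8 * ‖q‖ ^ (-(2 / 3 : ℝ)) * ⟪q, V⟫ * ⟪V, w⟫) := by
  have h1 := (hasStrictFDerivAt_norm_rpow_of_ne_zero hq ((4 : ℝ) / 3)).hasFDerivAt
  have h2 := (hasStrictFDerivAt_norm_rpow_of_ne_zero hq (-(2 / 3 : ℝ))).hasFDerivAt
  have h3 := hasFDerivAt_inner_const_right V q
  unfold invSqCostMTW
  rw [((h1.fun_sub ((h2.const_mul 4).fun_mul (h3.pow 2))).const_mul _).fderiv]
  norm_num
  ring

theorem fderiv_fderiv_invSqCostMTW_apply_of_inner_eq_zero (hq : q ≠ 0) {η : E}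
    (hVη : ⟪V, η⟫ = 0) :
    fderiv ℝ (fderiv ℝ (invSqCostMTW V)) q η η = (2 : ℝ) ^ (-(1 / 3 : ℝ)) *
      (4 / 3 * ‖q‖ ^ (-(2 / 3 : ℝ)) * ‖η‖ ^ 2 - 8 / 9 * ‖q‖ ^ (-(8 / 3 : ℝ)) * ⟪q, η⟫ ^ 2
        - 64 / 9 * ‖q‖ ^ (-(14 / 3 : ℝ)) * ⟪q, η⟫ ^ 2 * ⟪q, V⟫ ^ 2
        + 8 / 3 * ‖q‖ ^ (-(8 / 3 : ℝ)) * ‖η‖ ^ 2 * ⟪q, V⟫ ^ 2) := by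
  have hfd : (fun y ↦ fderiv ℝ (invSqCostMTW V) y η) =ᶠ[𝓝 q] fun y ↦ (2 : ℝ) ^ (-(1 / 3 : ℝ)) *
      ((4 / 3 * ‖y‖ ^ (-(2 / 3 : ℝ)) + 8 / 3 * ‖y‖ ^ (-(8 / 3 : ℝ)) * ⟪y, V⟫ ^ 2) * ⟪y, η⟫) := by
    filter_upwards [isOpen_ne.mem_nhds hq] with y hy
    rw [fderiv_invSqCostMTW_apply V hy, hVη]
    ring
  have hdiff : DifferentiableAt ℝ (fderiv ℝ (invSqCostMTW V)) q :=
    ((contDiffAt_invSqCostMTW V hq).fderiv_right (m := 1) le_rfl).differentiableAt one_ne_zero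
  rw [← fderiv_clm_apply_const_apply hdiff, hfd.fderiv_eq]
  have h1 := (hasStrictFDerivAt_norm_rpow_of_ne_zero hq (-(2 / 3 : ℝ))).hasFDerivAt
  have h2 := (hasStrictFDerivAt_norm_rpow_of_ne_zero hq (-(8 / 3 : ℝ))).hasFDerivAt
  have h3 := hasFDerivAt_inner_const_right V q
  have h4 := hasFDerivAt_inner_const_right η q
  rw [((((h1.const_mul _).fun_add ((h2.const_mul _).fun_mul (h3.pow 2))).fun_mul h4).const_mul
    _).fderiv]
  norm_num [hVη]
  ring

end InnerProductSpace

theorem MTW_plus_fails_inv_square_cost_general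
    (n : ℕ) (V η : EuclideanSpace ℝ (Fin n))
    (hV : ‖V‖ = 1) (hη : ‖η‖ = 1) (horth : ⟪V, η⟫ = 0)
    (g : EuclideanSpace ℝ (Fin n) → ℝ)
    (hg : ∀ q : EuclideanSpace ℝ (Fin n), q ≠ 0 →
      g q = (2 : ℝ) ^ (-(1 / 3 : ℝ)) *
        (‖q‖ ^ ((4 : ℝ) / 3) - 4 * ‖q‖ ^ (-(2 / 3 : ℝ)) * ⟪q, V⟫ ^ 2))
    (p : EuclideanSpace ℝ (Fin n))
    (hp : p = (1 / 2 : ℝ) • V + (Real.sqrt 3 / 2) • η) :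
    fderiv ℝ (fun q => fderiv ℝ g q) p η η = 0 := by
  have hsqrt3 : √3 ^ 2 = 3 := Real.sq_sqrt (by norm_num)
  have hpV : ⟪p, V⟫ = 1 / 2 := by
    rw [hp, inner_add_left, real_inner_smul_left, real_inner_smul_left, real_inner_self_eq_norm_sq,
      hV, real_inner_comm, horth]
    ring
  have hpη : ⟪p, η⟫ = √3 / 2 := by
    rw [hp, inner_add_left, real_inner_smul_left, real_inner_smul_left, real_inner_self_eq_norm_sq,
      hη, horth]
    ring
  have hp1 : ‖p‖ = 1 := by
    refine (pow_eq_one_iff_of_nonneg (norm_nonneg p) two_ne_zero).mp ?_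
    rw [← real_inner_self_eq_norm_sq]
    nth_rewrite 2 [hp]
    rw [inner_add_right, real_inner_smul_right, real_inner_smul_right, hpV, hpη]
    linear_combination hsqrt3 / 4
  have hp0 : p ≠ 0 := norm_ne_zero_iff.mp (by rw [hp1]; exact one_ne_zero)
  have hgG : g =ᶠ[𝓝 p] invSqCostMTW V := by
    filter_upwards [isOpen_ne.mem_nhds hp0] with q hq using hg q hq
  rw [hgG.fderiv.fderiv_eq, fderiv_fderiv_invSqCostMTW_apply_of_inner_eq_zero V hp0 horth, hp1, hη,
    hpη, hpV]
  simp only [Real.one_rpow, div_pow, hsqrt3]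
  ring

/-- Failure of the strict condition (MTW₊) for the cost `c(x,y) = ‖x − y‖⁻²`: for
orthonormal `V, η` and `g(p) = 2^{−1/3}(‖p‖^{4/3} − 4‖p‖^{−2/3}⟪p,V⟫²)` (defined for
`p ≠ 0`), the second derivative of `g` at `p = (1/2)V + (√3/2)η` evaluated at `(η, η)`
equals `0`. -/
theorem MTW_plus_fails_inv_square_cost
    (n : ℕ) (hn : 2 ≤ n) (V η : EuclideanSpace ℝ (Fin n))
    (hV : ‖V‖ = 1) (hη : ‖η‖ = 1) (horth : ⟪V, η⟫ = 0)
    (g : EuclideanSpace ℝ (Fin n) → ℝ)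
    (hg : ∀ q : EuclideanSpace ℝ (Fin n), q ≠ 0 →
      g q = (2 : ℝ) ^ (-(1 / 3 : ℝ)) *
        (‖q‖ ^ ((4 : ℝ) / 3) - 4 * ‖q‖ ^ (-(2 / 3 : ℝ)) * ⟪q, V⟫ ^ 2))
    (p : EuclideanSpace ℝ (Fin n))
    (hp : p = (1 / 2 : ℝ) • V + (Real.sqrt 3 / 2) • η) :
    fderiv ℝ (fun q => fderiv ℝ g q) p η η = 0 :=
  MTW_plus_fails_inv_square_cost_general n V η hV hη horth g hg p hp
end

section
/- Let n ≥ 1, let η ∈ ℝⁿ with ‖η‖ = 1, let λ ≠ 0 and set V := λη. Define g : ℝⁿ → ℝ by g(p) = 2^{−1/3}(‖p‖^{4/3}‖V‖² − 4‖p‖^{−2/3}⟪p,V⟫²) for p ≠ 0. Then for every t ≠ 0 and p := tη, the second derivative of g at p evaluated at (η, η) equals −(2^{5/3}/3)‖p‖^{−2/3}λ², which is strictly negative. (Hence the cost c(x,y) = ‖x−y‖⁻² does not satisfy the non-negative cross-curvature condition (NNCC), which would require this quantity to be nonnegative for all V, η without the orthogonality restriction.) -/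
/-!
Along the line spanned by `V` the two terms of `g` merge into one power:
`g(sη) = -3 · 2^{-1/3} λ² |s|^{4/3}`, which is strictly concave away from `0`.
As `g` is smooth near `p = tη ≠ 0`, its second derivative at `p` in direction `η` is the second
derivative of this one-variable function at `t`, i.e. `-3 · 2^{-1/3} λ² · (4/9) |t|^{-2/3}`.
-/

open RealInnerProductSpace Filter Topology

theorem abs_rpow_eq_sq_rpow (u a : ℝ) : |u| ^ a = (u ^ 2) ^ (a / 2) := by
  rw [← sq_abs, ← Real.rpow_natCast, ← Real.rpow_mul (abs_nonneg u)]
  push_cast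
  ring_nf

theorem hasDerivAt_sq_rpow (r : ℝ) {u : ℝ} (hu : u ≠ 0) :
    HasDerivAt (fun x : ℝ => (x ^ 2) ^ r) (2 * r * u * (u ^ 2) ^ (r - 1)) u := by
  convert (hasDerivAt_pow 2 u).rpow_const (p := r) (Or.inl (by positivity)) using 1
  push_cast
  ring

theorem deriv_deriv_sq_rpow (r : ℝ) {u : ℝ} (hu : u ≠ 0) :
    deriv (deriv fun x : ℝ => (x ^ 2) ^ r) u = 2 * r * (2 * r - 1) * (u ^ 2) ^ (r - 1) := by
  have hderiv : deriv (fun x : ℝ => (x ^ 2) ^ r) =ᶠ[𝓝 u]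
      fun x => 2 * r * x * (x ^ 2) ^ (r - 1) := by
    filter_upwards [eventually_ne_nhds hu] with x hx
    exact (hasDerivAt_sq_rpow r hx).deriv
  have hsecond : HasDerivAt (fun x => 2 * r * x * (x ^ 2) ^ (r - 1))
      (2 * r * 1 * (u ^ 2) ^ (r - 1) + 2 * r * u * (2 * (r - 1) * u * (u ^ 2) ^ (r - 1 - 1))) u :=
    ((hasDerivAt_id' u).const_mul (2 * r)).mul (hasDerivAt_sq_rpow (r - 1) hu)
  have hpow : u * (u * (u ^ 2) ^ (r - 1 - 1)) = (u ^ 2) ^ (r - 1) := by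
    rw [← mul_assoc, ← sq, Real.rpow_sub_one (by positivity)]
    field_simp
  rw [hderiv.deriv_eq, hsecond.deriv]
  linear_combination (4 * r * (r - 1)) * hpow

theorem deriv_deriv_comp_const_add (f : ℝ → ℝ) (a x : ℝ) :
    deriv (deriv fun s => f (a + s)) x = deriv (deriv f) (a + x) := by
  rw [funext (deriv_comp_const_add f a), deriv_comp_const_add]

theorem fderiv_fderiv_apply_eq_deriv_deriv {E F : Type*} [NormedAddCommGroup E]
    [NormedSpace ℝ E] [NormedAddCommGroup F] [NormedSpace ℝ F] {f : E → F} {p : E}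
    (hf : ContDiffAt ℝ 2 f p) (v : E) :
    fderiv ℝ (fderiv ℝ f) p v v = deriv (deriv fun s : ℝ => f (p + s • v)) 0 := by
  have hline (s : ℝ) : HasDerivAt (fun s : ℝ => p + s • v) v s := by
    simpa using ((hasDerivAt_id s).smul_const v).const_add p
  have hderiv : deriv (fun s : ℝ => f (p + s • v)) =ᶠ[𝓝 0]
      fun s => fderiv ℝ f (p + s • v) v := by
    have hcont : Tendsto (fun s : ℝ => p + s • v) (𝓝 0) (𝓝 p) := by
      simpa using (hline 0).continuousAt.tendsto
    filter_upwards [hcont.eventually (hf.eventually (by simp))] with s hs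
    exact ((hs.differentiableAt (by norm_num)).hasFDerivAt.comp_hasDerivAt s (hline s)).deriv
  have hf' : DifferentiableAt ℝ (fderiv ℝ f) p :=
    (hf.fderiv_right (m := 1) le_rfl).differentiableAt one_ne_zero
  have hcomp : HasDerivAt (fun s : ℝ => fderiv ℝ f (p + s • v) v)
      (fderiv ℝ (fderiv ℝ f) p v v) 0 := by
    simpa using (hf'.hasFDerivAt.comp_hasDerivAt_of_eq 0 (hline 0) (by simp)).clm_apply
      (hasDerivAt_const 0 v)
  rw [hderiv.deriv_eq, hcomp.deriv]

section

variable {E : Type*} [NormedAddCommGroup E] [InnerProductSpace ℝ E]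

/-- `p ↦ A_{ij}(x, p) V^i V^j` for the cost `‖x - y‖⁻²`. -/
noncomputable def mtwInvSq (V q : E) : ℝ :=
  (2 : ℝ) ^ (-(1 / 3 : ℝ)) *
    (‖q‖ ^ ((4 : ℝ) / 3) * ‖V‖ ^ 2 - 4 * ‖q‖ ^ (-(2 / 3 : ℝ)) * ⟪q, V⟫ ^ 2)

theorem contDiffAt_mtwInvSq (V : E) {q : E} (hq : q ≠ 0) {k : WithTop ℕ∞} :
    ContDiffAt ℝ k (mtwInvSq V) q := by
  have hnorm (a : ℝ) : ContDiffAt ℝ k (fun y : E => ‖y‖ ^ a) q :=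
    (contDiffAt_norm ℝ hq).rpow_const_of_ne (norm_ne_zero_iff.mpr hq)
  exact contDiffAt_const.mul (((hnorm _).mul contDiffAt_const).sub
    ((contDiffAt_const.mul (hnorm _)).mul ((contDiffAt_id.inner ℝ contDiffAt_const).pow 2)))

theorem mtwInvSq_smul_smul {η : E} (hη : ‖η‖ = 1) (l : ℝ) {u : ℝ} (hu : u ≠ 0) :
    mtwInvSq (l • η) (u • η) =
      -3 * (2 : ℝ) ^ (-(1 / 3 : ℝ)) * l ^ 2 * (u ^ 2) ^ ((2 : ℝ) / 3) := by
  have hnorm : ‖u • η‖ = |u| := by rw [norm_smul, hη, Real.norm_eq_abs, mul_one]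
  have hinner : ⟪u • η, l • η⟫ = u * l := by
    rw [real_inner_smul_left, real_inner_smul_right, real_inner_self_eq_norm_sq, hη]
    ring
  have hV : ‖l • η‖ ^ 2 = l ^ 2 := by rw [norm_smul, hη, Real.norm_eq_abs, mul_one, sq_abs]
  have hpow : (u ^ 2) ^ (-(1 / 3 : ℝ)) * u ^ 2 = (u ^ 2) ^ ((2 : ℝ) / 3) := by
    rw [← Real.rpow_add_one (by positivity)]
    norm_num
  rw [mtwInvSq, hnorm, hinner, hV, abs_rpow_eq_sq_rpow, abs_rpow_eq_sq_rpow]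
  norm_num only
  linear_combination (-4 * (2 : ℝ) ^ (-(1 / 3 : ℝ)) * l ^ 2) * hpow

end

theorem NNCC_fails_inv_square_cost_general
    (n : ℕ) (η : EuclideanSpace ℝ (Fin n)) (hη : ‖η‖ = 1)
    (l : ℝ) (hl : l ≠ 0) (V : EuclideanSpace ℝ (Fin n)) (hV : V = l • η)
    (g : EuclideanSpace ℝ (Fin n) → ℝ)
    (hg : ∀ q : EuclideanSpace ℝ (Fin n), q ≠ 0 →
      g q = (2 : ℝ) ^ (-(1 / 3 : ℝ)) *
        (‖q‖ ^ ((4 : ℝ) / 3) * ‖V‖ ^ 2 - 4 * ‖q‖ ^ (-(2 / 3 : ℝ)) * ⟪q, V⟫ ^ 2))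
    (t : ℝ) (ht : t ≠ 0) (p : EuclideanSpace ℝ (Fin n)) (hp : p = t • η) :
    fderiv ℝ (fun q => fderiv ℝ g q) p η η =
      -((2 : ℝ) ^ ((5 : ℝ) / 3) / 3) * ‖p‖ ^ (-(2 / 3 : ℝ)) * l ^ 2 ∧
    fderiv ℝ (fun q => fderiv ℝ g q) p η η < 0 := by
  have hη0 : η ≠ 0 := norm_ne_zero_iff.mp (by rw [hη]; exact one_ne_zero)
  have hp0 : p ≠ 0 := hp ▸ smul_ne_zero ht hη0
  have hgp : g =ᶠ[𝓝 p] mtwInvSq V := (eventually_ne_nhds hp0).mono hg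
  have hline : (fun s : ℝ => g (p + s • η)) =ᶠ[𝓝 0]
      fun s => -3 * (2 : ℝ) ^ (-(1 / 3 : ℝ)) * l ^ 2 * ((t + s) ^ 2) ^ ((2 : ℝ) / 3) := by
    have hts : ∀ᶠ s in 𝓝 (0 : ℝ), t + s ≠ 0 :=
      (continuous_const_add t).continuousAt.eventually_ne (by simpa using ht)
    filter_upwards [hts] with s hs
    rw [hp, ← add_smul, hg _ (smul_ne_zero hs hη0), hV]
    exact mtwInvSq_smul_smul hη l hs
  have hnorm : ‖p‖ = |t| := by rw [hp, norm_smul, hη, Real.norm_eq_abs, mul_one]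
  have htwo : (2 : ℝ) ^ ((5 : ℝ) / 3) = 4 * (2 : ℝ) ^ (-(1 / 3 : ℝ)) := by
    rw [show (5 : ℝ) / 3 = -(1 / 3) + 2 by norm_num, Real.rpow_add two_pos, Real.rpow_two]
    ring
  have hvalue : fderiv ℝ (fun q => fderiv ℝ g q) p η η =
      -((2 : ℝ) ^ ((5 : ℝ) / 3) / 3) * ‖p‖ ^ (-(2 / 3 : ℝ)) * l ^ 2 := by
    rw [fderiv_fderiv_apply_eq_deriv_deriv
      ((contDiffAt_mtwInvSq V hp0).congr_of_eventuallyEq hgp) η, hline.deriv.deriv_eq]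
    simp only [deriv_const_mul_field']
    rw [deriv_deriv_comp_const_add (fun x : ℝ => (x ^ 2) ^ ((2 : ℝ) / 3)), add_zero,
      deriv_deriv_sq_rpow _ ht, hnorm, abs_rpow_eq_sq_rpow, htwo]
    norm_num
    ring
  refine ⟨hvalue, hvalue ▸ ?_⟩
  have : 0 < (2 : ℝ) ^ ((5 : ℝ) / 3) / 3 * ‖p‖ ^ (-(2 / 3 : ℝ)) * l ^ 2 := by positivity
  linarith

/-- Failure of the non-negative cross-curvature condition (NNCC) for the cost
`c(x,y) = ‖x − y‖⁻²`: with `η` a unit vector, `V = λη` for `λ ≠ 0`, and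
`g(p) = 2^{−1/3}(‖p‖^{4/3}‖V‖² − 4‖p‖^{−2/3}⟪p,V⟫²)` (defined for `p ≠ 0`), for every
`t ≠ 0` and `p = tη` the second derivative of `g` at `p` evaluated at `(η, η)` equals
`−(2^{5/3}/3)‖p‖^{−2/3}λ² < 0`. -/
theorem NNCC_fails_inv_square_cost
    (n : ℕ) (hn : 1 ≤ n) (η : EuclideanSpace ℝ (Fin n)) (hη : ‖η‖ = 1)
    (l : ℝ) (hl : l ≠ 0) (V : EuclideanSpace ℝ (Fin n)) (hV : V = l • η)
    (g : EuclideanSpace ℝ (Fin n) → ℝ)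
    (hg : ∀ q : EuclideanSpace ℝ (Fin n), q ≠ 0 →
      g q = (2 : ℝ) ^ (-(1 / 3 : ℝ)) *
        (‖q‖ ^ ((4 : ℝ) / 3) * ‖V‖ ^ 2 - 4 * ‖q‖ ^ (-(2 / 3 : ℝ)) * ⟪q, V⟫ ^ 2))
    (t : ℝ) (ht : t ≠ 0) (p : EuclideanSpace ℝ (Fin n)) (hp : p = t • η) :
    fderiv ℝ (fun q => fderiv ℝ g q) p η η =
      -((2 : ℝ) ^ ((5 : ℝ) / 3) / 3) * ‖p‖ ^ (-(2 / 3 : ℝ)) * l ^ 2 ∧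
    fderiv ℝ (fun q => fderiv ℝ g q) p η η < 0 :=
  NNCC_fails_inv_square_cost_general n η hη l hl V hV g hg t ht p hp
end

section
/- Let Ω, Ω̄ ⊆ ℝⁿ be bounded open sets and c : ℝⁿ × ℝⁿ → ℝ a cost function satisfying (A0)–(A2) for Ω, Ω̄, such that Ω and Ω̄ are c-convex with respect to each other, and such that c satisfies Loeper's maximum principle. Let u : Ω → ℝ be a c-convex function, let x₀ ∈ Ω and x̄₀ ∈ ∂_c u(x₀), and define the contact set S₀ := {x ∈ Ω : u(x) = −c(x, x̄₀) + c(x₀, x̄₀) + u(x₀)}. Assume that −D_x c(x₀, x̄₀) lies in the relative (intrinsic) interior of the convex set {−D_x c(x₀, x̄) : x̄ ∈ ∂_c u(x₀)}. Then for every point x_e ∈ S₀ one has ∂_c u(x₀) ⊆ ∂_c u(x_e). -/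
/-!
Let `ȳ ∈ ∂_c u(x₀)` and suppose its supporting function `m_ȳ = -c(·,ȳ) + c(x₀,ȳ) + u(x₀)` lies
strictly below `u` at `x_e`. As `-D_x c(x₀,x̄₀)` is relatively interior, the `c`-segment from `ȳ`
through `x̄₀` extends beyond `x̄₀` to some `ȳ' ∈ ∂_c u(x₀)`. Loeper's principle gives
`m_x̄₀ ≤ max m_ȳ m_ȳ'`; at `x_e` we have `m_ȳ < u = m_x̄₀` and `m_ȳ' ≤ u`, so near `x_e` the
function `m_x̄₀` lies below `m_ȳ'` and touches it at `x_e`. Their gradients agree there, so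
the twist condition gives `ȳ' = x̄₀`. A point lies in an open segment ending at itself only if the
segment is degenerate, so the twist condition at `x₀` gives `ȳ = x̄₀`, contradicting the strict
inequality.
-/

open Set Filter Topology

/-- `D_x c(x,y)`: the Fréchet derivative of `c` in its first variable, identified with a
vector in `ℝⁿ` via the inner product (i.e. the gradient in the first variable). -/
noncomputable def Dx {n : ℕ} (c : EuclideanSpace ℝ (Fin n) → EuclideanSpace ℝ (Fin n) → ℝ)
    (x y : EuclideanSpace ℝ (Fin n)) : EuclideanSpace ℝ (Fin n) :=
  gradient (fun z => c z y) x

/-- `D_x̄ c(x,y)`: the Fréchet derivative of `c` in its second variable, identified with a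
vector in `ℝⁿ` via the inner product (i.e. the gradient in the second variable). -/
noncomputable def Dy {n : ℕ} (c : EuclideanSpace ℝ (Fin n) → EuclideanSpace ℝ (Fin n) → ℝ)
    (x y : EuclideanSpace ℝ (Fin n)) : EuclideanSpace ℝ (Fin n) :=
  gradient (fun z => c x z) y

/-- The `c`-subdifferential of `u` at `x₀` (relative to domains `Ω`, `Ω̄`):
`∂_c u(x₀) = {x̄ ∈ Ω̄ : u(x) ≥ u(x₀) − c(x,x̄) + c(x₀,x̄) for all x ∈ Ω}`. -/
def csub {n : ℕ} (Ω Ωb : Set (EuclideanSpace ℝ (Fin n)))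
    (c : EuclideanSpace ℝ (Fin n) → EuclideanSpace ℝ (Fin n) → ℝ)
    (u : EuclideanSpace ℝ (Fin n) → ℝ) (x₀ : EuclideanSpace ℝ (Fin n)) :
    Set (EuclideanSpace ℝ (Fin n)) :=
  {y ∈ Ωb | ∀ x ∈ Ω, u x₀ - c x y + c x₀ y ≤ u x}

theorem exists_mem_openSegment_of_mem_intrinsicInterior {E : Type*} [NormedAddCommGroup E]
    [NormedSpace ℝ E] {s : Set E} {x y : E} (hx : x ∈ intrinsicInterior ℝ s) (hy : y ∈ s) :
    ∃ z ∈ s, x ∈ openSegment ℝ y z := by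
  obtain ⟨w, hw, rfl⟩ := mem_intrinsicInterior.mp hx
  let φ : ℝ → affineSpan ℝ s := fun t =>
    ⟨AffineMap.lineMap y w t, AffineMap.lineMap_mem t (subset_affineSpan ℝ s hy) w.2⟩
  have hφ : Continuous φ := by fun_prop
  have hφ1 : φ 1 = w := by ext; simp [φ]
  have hmem : ∀ᶠ t in 𝓝[>] 1, φ t ∈ (↑) ⁻¹' s :=
    (hφ.tendsto' 1 w hφ1 |>.eventually_mem (mem_interior_iff_mem_nhds.mp hw)).filter_mono
      nhdsWithin_le_nhds
  obtain ⟨t, hts, ht1⟩ := (hmem.and self_mem_nhdsWithin).exists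
  have ht0 : (0 : ℝ) < t := one_pos.trans ht1
  refine ⟨_, hts, openSegment_eq_image_lineMap ℝ y _ ▸
    ⟨t⁻¹, ⟨inv_pos.2 ht0, inv_lt_one_of_one_lt₀ ht1⟩, ?_⟩⟩
  simp [φ, AffineMap.lineMap_apply, smul_smul, inv_mul_cancel₀ ht0.ne']

theorem differentiableAt_left_of_contDiffOn {E F G : Type*} [NormedAddCommGroup E] [NormedSpace ℝ E]
    [NormedAddCommGroup F] [NormedSpace ℝ F] [NormedAddCommGroup G] [NormedSpace ℝ G]
    {f : E → F → G} {U : Set (E × F)} {k : WithTop ℕ∞} {x : E} {y : F} (hU : IsOpen U)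
    (hf : ContDiffOn ℝ k (fun q => f q.1 q.2) U) (hk : k ≠ 0) (hxy : (x, y) ∈ U) :
    DifferentiableAt ℝ (fun z => f z y) x := by
  have hpair : DifferentiableAt ℝ (fun z : E => (z, y)) x :=
    differentiableAt_id.prodMk (differentiableAt_const y)
  exact ((hf.contDiffAt (hU.mem_nhds hxy)).differentiableAt hk).comp x hpair

theorem isLocalMax_sub_of_eventually_le_max {X : Type*} [TopologicalSpace X] {f g h : X → ℝ}
    {a : X} (hle : ∀ᶠ x in 𝓝 a, h x ≤ max (f x) (g x)) (hf : ContinuousAt f a)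
    (hg : ContinuousAt g a) (hfa : f a < h a) (hga : g a ≤ h a) :
    IsLocalMax (fun x => h x - g x) a := by
  have hag : h a ≤ g a := (le_max_iff.mp hle.self_of_nhds).resolve_left hfa.not_ge
  filter_upwards [hle, hf.eventually_lt hg (hfa.trans_le hag)] with x hx hfg
  rw [max_eq_right hfg.le] at hx
  linarith

theorem Dx_eq_of_isLocalMax {n : ℕ} {c : EuclideanSpace ℝ (Fin n) → EuclideanSpace ℝ (Fin n) → ℝ}
    {x y₁ y₂ : EuclideanSpace ℝ (Fin n)} {k₁ k₂ : ℝ}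
    (h₁ : DifferentiableAt ℝ (fun z => c z y₁) x) (h₂ : DifferentiableAt ℝ (fun z => c z y₂) x)
    (hmax : IsLocalMax (fun z => (-c z y₁ + k₁) - (-c z y₂ + k₂)) x) :
    Dx c x y₁ = Dx c x y₂ := by
  have h0 := hmax.hasFDerivAt_eq_zero
    ((h₁.hasFDerivAt.neg.add_const k₁).sub (h₂.hasFDerivAt.neg.add_const k₂))
  rw [neg_sub_neg, sub_eq_zero] at h0
  simp only [Dx, gradient, h0]

theorem mem_csub_of_contact {n : ℕ} {Ω Ωb : Set (EuclideanSpace ℝ (Fin n))}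
    {c : EuclideanSpace ℝ (Fin n) → EuclideanSpace ℝ (Fin n) → ℝ}
    {u : EuclideanSpace ℝ (Fin n) → ℝ} {x₀ x₁ y : EuclideanSpace ℝ (Fin n)}
    (hy : y ∈ csub Ω Ωb c u x₀) (hcontact : u x₀ - c x₁ y + c x₀ y = u x₁) :
    y ∈ csub Ω Ωb c u x₁ :=
  ⟨hy.1, fun x hx => by linarith [hy.2 x hx]⟩

theorem csubdifferential_containment_general
    (n : ℕ) (Ω Ωb : Set (EuclideanSpace ℝ (Fin n)))
    (hΩo : IsOpen Ω)
    (c : EuclideanSpace ℝ (Fin n) → EuclideanSpace ℝ (Fin n) → ℝ)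
    -- (A0): `c` is C⁴ on a neighborhood of the closure of `Ω × Ω̄`
    (hA0 : ∃ U : Set (EuclideanSpace ℝ (Fin n) × EuclideanSpace ℝ (Fin n)),
      IsOpen U ∧ closure (Ω ×ˢ Ωb) ⊆ U ∧
        ContDiffOn ℝ 4 (fun q : EuclideanSpace ℝ (Fin n) × EuclideanSpace ℝ (Fin n) =>
          c q.1 q.2) U)
    -- (A1), twist
    (hA1x : ∀ x ∈ Ω, Set.InjOn (fun y => -Dx c x y) Ωb)
    -- Loeper's maximum principle
    (hLoeper : ∀ x₀ ∈ Ω, ∀ x ∈ Ω, ∀ y₀ ∈ Ωb, ∀ y₁ ∈ Ωb, ∀ t ∈ Set.Icc (0:ℝ) 1,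
      ∀ yt ∈ Ωb,
        -Dx c x₀ yt = (1 - t) • (-Dx c x₀ y₀) + t • (-Dx c x₀ y₁) →
        -c x yt + c x₀ yt ≤ max (-c x y₀ + c x₀ y₀) (-c x y₁ + c x₀ y₁))
    (u : EuclideanSpace ℝ (Fin n) → ℝ)
    (x₀ : EuclideanSpace ℝ (Fin n)) (hx₀ : x₀ ∈ Ω)
    (xb₀ : EuclideanSpace ℝ (Fin n)) (hxb₀ : xb₀ ∈ csub Ω Ωb c u x₀)
    -- `−D_x c(x₀,x̄₀)` lies in the relative interior of `{−D_x c(x₀,x̄) : x̄ ∈ ∂_c u(x₀)}`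
    (hrelint : -Dx c x₀ xb₀ ∈
      intrinsicInterior ℝ ((fun y => -Dx c x₀ y) '' csub Ω Ωb c u x₀))
    (x_e : EuclideanSpace ℝ (Fin n)) (hx_e : x_e ∈ Ω)
    -- `x_e` lies in the contact set `S₀`
    (hcontact : u x_e = -c x_e xb₀ + c x₀ xb₀ + u x₀) :
    csub Ω Ωb c u x₀ ⊆ csub Ω Ωb c u x_e := by
  obtain ⟨U, hUo, hΩU, hcU⟩ := hA0
  have hdiff : ∀ x ∈ Ω, ∀ y ∈ Ωb, DifferentiableAt ℝ (fun z => c z y) x := fun x hx y hy =>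
    differentiableAt_left_of_contDiffOn hUo hcU (by norm_num) (hΩU (subset_closure ⟨hx, hy⟩))
  intro y hy
  refine mem_csub_of_contact hy ?_
  by_contra hne
  have hlt := (hy.2 x_e hx_e).lt_of_ne hne
  obtain ⟨_, ⟨y', hy', rfl⟩, hseg⟩ :=
    exists_mem_openSegment_of_mem_intrinsicInterior hrelint (mem_image_of_mem _ hy)
  obtain ⟨t, ht, hpt⟩ := (openSegment_eq_image ℝ (-Dx c x₀ y) (-Dx c x₀ y')).le hseg
  have hLoeper_seg : ∀ x ∈ Ω, -c x xb₀ + c x₀ xb₀ ≤ max (-c x y + c x₀ y) (-c x y' + c x₀ y') :=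
    fun x hx => hLoeper x₀ hx₀ x hx y hy.1 y' hy'.1 t (Ioo_subset_Icc_self ht) xb₀ hxb₀.1 hpt.symm
  have hmax := isLocalMax_sub_of_eventually_le_max
    (eventually_of_mem (hΩo.mem_nhds hx_e) hLoeper_seg)
    ((hdiff x_e hx_e y hy.1).continuousAt.neg.add continuousAt_const)
    ((hdiff x_e hx_e y' hy'.1).continuousAt.neg.add continuousAt_const)
    (by linarith) (by linarith [hy'.2 x_e hx_e])
  obtain rfl : y' = xb₀ := hA1x x_e hx_e hy'.1 hxb₀.1 <| congrArg Neg.neg <|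
    (Dx_eq_of_isLocalMax (hdiff x_e hx_e xb₀ hxb₀.1) (hdiff x_e hx_e y' hy'.1) hmax).symm
  obtain rfl : y = y' := hA1x x₀ hx₀ hy.1 hy'.1 (right_mem_openSegment_iff.mp hseg)
  exact hne (by linarith)

/-- Lemma 4.1 of the paper (for domains in `ℝⁿ`): under (A0)–(A2), mutual `c`-convexity of
the domains and Loeper's maximum principle, if `x̄₀ ∈ ∂_c u(x₀)` with `−D_x c(x₀,x̄₀)` in
the relative interior of `{−D_x c(x₀,x̄) : x̄ ∈ ∂_c u(x₀)}`, then for every point `x_e` of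
the contact set `S₀ = {x ∈ Ω : u(x) = −c(x,x̄₀) + c(x₀,x̄₀) + u(x₀)}` one has
`∂_c u(x₀) ⊆ ∂_c u(x_e)`. -/
theorem csubdifferential_containment
    (n : ℕ) (Ω Ωb : Set (EuclideanSpace ℝ (Fin n)))
    (hΩo : IsOpen Ω) (hΩbd : Bornology.IsBounded Ω)
    (hΩbo : IsOpen Ωb) (hΩbbd : Bornology.IsBounded Ωb)
    (c : EuclideanSpace ℝ (Fin n) → EuclideanSpace ℝ (Fin n) → ℝ)
    -- (A0): `c` is C⁴ on a neighborhood of the closure of `Ω × Ω̄`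
    (hA0 : ∃ U : Set (EuclideanSpace ℝ (Fin n) × EuclideanSpace ℝ (Fin n)),
      IsOpen U ∧ closure (Ω ×ˢ Ωb) ⊆ U ∧
        ContDiffOn ℝ 4 (fun q : EuclideanSpace ℝ (Fin n) × EuclideanSpace ℝ (Fin n) =>
          c q.1 q.2) U)
    -- (A1), twist
    (hA1x : ∀ x ∈ Ω, Set.InjOn (fun y => -Dx c x y) Ωb)
    (hA1y : ∀ y ∈ Ωb, Set.InjOn (fun x => -Dy c x y) Ω)
    -- (A2), nondegeneracy
    (hA2 : ∀ x ∈ Ω, ∀ y ∈ Ωb,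
      Function.Bijective (fderiv ℝ (fun y' => Dx c x y') y))
    -- `Ω̄` is `c`-convex with respect to `Ω` and vice versa
    (hccΩb : ∀ x ∈ Ω, Convex ℝ ((fun y => -Dx c x y) '' Ωb))
    (hccΩ : ∀ y ∈ Ωb, Convex ℝ ((fun x => -Dy c x y) '' Ω))
    -- Loeper's maximum principle
    (hLoeper : ∀ x₀ ∈ Ω, ∀ x ∈ Ω, ∀ y₀ ∈ Ωb, ∀ y₁ ∈ Ωb, ∀ t ∈ Set.Icc (0:ℝ) 1,
      ∀ yt ∈ Ωb,
        -Dx c x₀ yt = (1 - t) • (-Dx c x₀ y₀) + t • (-Dx c x₀ y₁) →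
        -c x yt + c x₀ yt ≤ max (-c x y₀ + c x₀ y₀) (-c x y₁ + c x₀ y₁))
    (u : EuclideanSpace ℝ (Fin n) → ℝ)
    -- `u` is `c`-convex
    (hu : ∀ x₀ ∈ Ω, ∃ y₀ ∈ Ωb, ∃ l : ℝ,
      u x₀ = -c x₀ y₀ + l ∧ ∀ x ∈ Ω, -c x y₀ + l ≤ u x)
    (x₀ : EuclideanSpace ℝ (Fin n)) (hx₀ : x₀ ∈ Ω)
    (xb₀ : EuclideanSpace ℝ (Fin n)) (hxb₀ : xb₀ ∈ csub Ω Ωb c u x₀)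
    -- `−D_x c(x₀,x̄₀)` lies in the relative interior of `{−D_x c(x₀,x̄) : x̄ ∈ ∂_c u(x₀)}`
    (hrelint : -Dx c x₀ xb₀ ∈
      intrinsicInterior ℝ ((fun y => -Dx c x₀ y) '' csub Ω Ωb c u x₀))
    (x_e : EuclideanSpace ℝ (Fin n)) (hx_e : x_e ∈ Ω)
    -- `x_e` lies in the contact set `S₀`
    (hcontact : u x_e = -c x_e xb₀ + c x₀ xb₀ + u x₀) :
    csub Ω Ωb c u x₀ ⊆ csub Ω Ωb c u x_e :=
  csubdifferential_containment_general n Ω Ωb hΩo c hA0 hA1x hLoeper u x₀ hx₀ xb₀ hxb₀ hrelint x_e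
    hx_e hcontact
end

section
/- Let Ω, Ω̄ ⊆ ℝⁿ be bounded open sets and c : ℝⁿ × ℝⁿ → ℝ a cost function satisfying (A0)–(A2) for Ω, Ω̄, such that Ω and Ω̄ are c-convex with respect to each other, and such that c satisfies Loeper's maximum principle. Let u : Ω → ℝ be a c-convex function. Then for any x₀ ∈ Ω, the c-subdifferential ∂_c u(x₀) is c-convex with respect to x₀; that is, the set {−D_x c(x₀, x̄) : x̄ ∈ ∂_c u(x₀)} ⊆ ℝⁿ is convex. -/
open Set

/-- Corollary 2.1 of the paper (for domains in `ℝⁿ`): under (A0)–(A2), mutual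
`c`-convexity of the domains and Loeper's maximum principle, for a `c`-convex function `u`
the `c`-subdifferential `∂_c u(x₀)` is `c`-convex with respect to `x₀`, i.e. its image
under `x̄ ↦ −D_x c(x₀,x̄)` is convex. -/
theorem csubdifferential_cconvex
    (n : ℕ) (Ω Ωb : Set (EuclideanSpace ℝ (Fin n)))
    (hΩo : IsOpen Ω) (hΩbd : Bornology.IsBounded Ω)
    (hΩbo : IsOpen Ωb) (hΩbbd : Bornology.IsBounded Ωb)
    (c : EuclideanSpace ℝ (Fin n) → EuclideanSpace ℝ (Fin n) → ℝ)
    -- (A0): `c` is C⁴ on a neighborhood of the closure of `Ω × Ω̄`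
    (hA0 : ∃ U : Set (EuclideanSpace ℝ (Fin n) × EuclideanSpace ℝ (Fin n)),
      IsOpen U ∧ closure (Ω ×ˢ Ωb) ⊆ U ∧
        ContDiffOn ℝ 4 (fun q : EuclideanSpace ℝ (Fin n) × EuclideanSpace ℝ (Fin n) =>
          c q.1 q.2) U)
    -- (A1), twist
    (hA1x : ∀ x ∈ Ω, Set.InjOn (fun y => -Dx c x y) Ωb)
    (hA1y : ∀ y ∈ Ωb, Set.InjOn (fun x => -Dy c x y) Ω)
    -- (A2), nondegeneracy
    (hA2 : ∀ x ∈ Ω, ∀ y ∈ Ωb,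
      Function.Bijective (fderiv ℝ (fun y' => Dx c x y') y))
    -- `Ω̄` is `c`-convex with respect to `Ω` and vice versa
    (hccΩb : ∀ x ∈ Ω, Convex ℝ ((fun y => -Dx c x y) '' Ωb))
    (hccΩ : ∀ y ∈ Ωb, Convex ℝ ((fun x => -Dy c x y) '' Ω))
    -- Loeper's maximum principle
    (hLoeper : ∀ x₀ ∈ Ω, ∀ x ∈ Ω, ∀ y₀ ∈ Ωb, ∀ y₁ ∈ Ωb, ∀ t ∈ Set.Icc (0:ℝ) 1,
      ∀ yt ∈ Ωb,
        -Dx c x₀ yt = (1 - t) • (-Dx c x₀ y₀) + t • (-Dx c x₀ y₁) →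
        -c x yt + c x₀ yt ≤ max (-c x y₀ + c x₀ y₀) (-c x y₁ + c x₀ y₁))
    (u : EuclideanSpace ℝ (Fin n) → ℝ)
    -- `u` is `c`-convex
    (hu : ∀ x₀ ∈ Ω, ∃ y₀ ∈ Ωb, ∃ l : ℝ,
      u x₀ = -c x₀ y₀ + l ∧ ∀ x ∈ Ω, -c x y₀ + l ≤ u x) :
    ∀ x₀ ∈ Ω, Convex ℝ ((fun y => -Dx c x₀ y) '' csub Ω Ωb c u x₀) := by
  intro x₀ hx₀
  rintro p₀ ⟨y₀, ⟨hy₀b, hy₀s⟩, rfl⟩ p₁ ⟨y₁, ⟨hy₁b, hy₁s⟩, rfl⟩ a b ha hb hab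
  have hmem : a • (-Dx c x₀ y₀) + b • (-Dx c x₀ y₁) ∈ (fun y => -Dx c x₀ y) '' Ωb :=
    (hccΩb x₀ hx₀) ⟨y₀, hy₀b, rfl⟩ ⟨y₁, hy₁b, rfl⟩ ha hb hab
  obtain ⟨yt, hytb, hyt⟩ := hmem
  refine ⟨yt, ⟨hytb, ?_⟩, hyt⟩
  intro x hx
  have ht : b ∈ Set.Icc (0:ℝ) 1 := ⟨hb, by linarith⟩
  have hL := hLoeper x₀ hx₀ x hx y₀ hy₀b y₁ hy₁b b ht yt hytb
    (by simp only [] at hyt; rw [show (1 - b) = a by linarith]; exact hyt)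
  have h0 := hy₀s x hx
  have h1 := hy₁s x hx
  rcases max_cases (-c x y₀ + c x₀ y₀) (-c x y₁ + c x₀ y₁) with ⟨h, _⟩ | ⟨h, _⟩ <;>
    linarith [hL]
end
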